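/- Let k ∈ ℕ and let N = (N₁,…,N_k) be a Gaussian random vector with independent centered entries each of variance σ². Let ℝ^k_{>0} = {ȳ ∈ ℝ^k : y₁ > ⋯ > y_k > 0}, and say a subset Q ⊆ ℝ^k_> is closed under ℝ^k_{>0}-displacement if whenever x̄ ∈ Q and ȳ ∈ ℝ^k_{>0} then x̄ + ȳ ∈ Q. For ā ∈ ℝ^k_>, let μ_{ā,σ,Q} denote the conditional distribution of N given that ā + N ∈ Q (assuming P(ā + N ∈ Q) > 0). Fix M > 0 and c ∈ (0,1). Then for all ε > 0 there exists δ = δ(ε, M, c) > 0 such that for all ā ∈ ℝ^k_> with ‖ā‖_∞ ≤ M, all σ ∈ (c, c⁻¹), all Q ⊆ ℝ^k_> closed under ℝ^k_{>0}-displacement with P(ā + N ∈ Q) > 0, and each pair 1 ≤ i < j ≤ k: μ_{ā,σ,Q}{ x̄ ∈ ℝ^k : |(x_i + a_i) − (x_j + a_j)| < δ and x₁ ≤ M } < ε. -/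

import Mathlib

open MeasureTheory ProbabilityTheory
open scoped ENNReal NNReal

noncomputable section

/-!
Work with `Y = a + N`, whose law is the product `ν` of the Gaussians `𝒩(aₗ, σ²)`, and let
`E ⊆ Q` be the event `Yᵢ - Yⱼ < δ, Y₁ ≤ 2M`. On `E` every coordinate of `Y - a` is at most
`3M`, so translating `E` by a displacement vector `w` with entries in `[0, k]` costs at most a
factor `κ > 0` (depending only on `M`, `c`, `k`) in Gaussian density: `ν (E + w) ≥ κ ν E`.
Choosing `w` strictly decreasing with `wᵢ - wⱼ = (2m+1)δ` for `m < n = 1/(2δ)` yields `n`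
translates of `E`, all inside `Q` (closure under displacement) and pairwise disjoint (the gap
`Yᵢ - Yⱼ` lands in disjoint windows). Hence `n κ ν E ≤ ν Q`, i.e. `ν[E | Q] ≤ 1/(nκ)`.
-/

theorem lintegral_fin_prod_eq_prod {n : ℕ} {α : Type*} [MeasurableSpace α]
    (μ : Fin n → Measure α) [∀ i, SigmaFinite (μ i)] {f : Fin n → α → ℝ≥0∞}
    (hf : ∀ i, Measurable (f i)) :
    ∫⁻ x, ∏ i, f i (x i) ∂Measure.pi μ = ∏ i, ∫⁻ t, f i t ∂μ i := by
  induction n with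
  | zero => simp
  | succ n ih =>
    have hprod : Measurable fun y : Fin n → α => ∏ i : Fin n, f i.succ (y i) :=
      Finset.measurable_prod _ fun i _ => (hf _).comp (measurable_pi_apply i)
    have hprod' : Measurable fun x : Fin (n + 1) → α => ∏ i, f i (x i) :=
      Finset.measurable_prod _ fun i _ => (hf i).comp (measurable_pi_apply i)
    rw [← (measurePreserving_piFinSuccAbove μ 0).symm.lintegral_comp hprod']
    simp only [MeasurableEquiv.piFinSuccAbove_symm_apply, Fin.prod_univ_succ,
      Fin.insertNthEquiv_apply, Fin.insertNth_zero', Fin.cons_succ, Fin.cons_zero]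
    rw [lintegral_prod_mul (hf 0).aemeasurable hprod.aemeasurable, ih _ fun i => hf i.succ]
    simp [Fin.zero_succAbove]

theorem pi_eq_withDensity_prod {n : ℕ} {α : Type*} [MeasurableSpace α]
    {μ ρ : Fin n → Measure α} [∀ i, SigmaFinite (μ i)] [∀ i, SigmaFinite (ρ i)]
    {f : Fin n → α → ℝ≥0∞} (hf : ∀ i, Measurable (f i))
    (hρ : ∀ i, ρ i = (μ i).withDensity (f i)) :
    Measure.pi ρ = (Measure.pi μ).withDensity fun x => ∏ i, f i (x i) := by
  refine Measure.pi_eq (μ := ρ) fun s hs => ?_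
  classical
  have hind : (Set.univ.pi s).indicator (fun x => ∏ i, f i (x i))
      = fun x => ∏ i, (s i).indicator (f i) (x i) := by
    ext x
    simp [Set.indicator, Finset.prod_ite_zero]
  rw [withDensity_apply _ (.univ_pi hs), ← lintegral_indicator (.univ_pi hs), hind,
    lintegral_fin_prod_eq_prod μ fun i => (hf i).indicator (hs i)]
  simp_rw [lintegral_indicator (hs _), hρ, withDensity_apply _ (hs _)]

theorem mul_withDensity_le_withDensity_image_add {G : Type*} [MeasurableSpace G] [AddGroup G]
    [MeasurableAdd G] {μ : Measure G} [μ.IsAddRightInvariant] [SFinite μ] {f : G → ℝ≥0∞}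
    (hf : Measurable f) {κ : ℝ≥0∞} {w : G} {E : Set G} (h : ∀ x ∈ E, κ * f x ≤ f (x + w)) :
    κ * μ.withDensity f E ≤ μ.withDensity f ((· + w) '' E) := by
  rw [withDensity_apply' _ E, withDensity_apply' _ _, ← lintegral_const_mul _ hf,
    ← (measurePreserving_add_right μ w).setLIntegral_comp_emb (measurableEmbedding_addRight w)]
  exact setLIntegral_mono (hf.comp (measurable_add_const w)) h

theorem exp_mul_gaussianPDFReal_le_gaussianPDFReal_add (μ : ℝ) {v : ℝ≥0} {s X W x w : ℝ}
    (hs : 0 < s) (hsv : s ≤ v) (hX : 0 ≤ X) (hx : x - μ ≤ X) (hw : 0 ≤ w) (hwW : w ≤ W) :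
    Real.exp (-((2 * X * W + W ^ 2) / (2 * s))) * gaussianPDFReal μ v x
      ≤ gaussianPDFReal μ v (x + w) := by
  have hv : (0 : ℝ) < v := hs.trans_le hsv
  have hsq : -(x + w - μ) ^ 2 / (2 * v)
      = -(x - μ) ^ 2 / (2 * v) - (2 * (x - μ) * w + w ^ 2) / (2 * v) := by
    field_simp; ring
  have hquad : (2 * (x - μ) * w + w ^ 2) / (2 * v) ≤ (2 * X * W + W ^ 2) / (2 * s) :=
    div_le_div₀ (by nlinarith) (by nlinarith) (by positivity) (by linarith)
  rw [gaussianPDFReal, gaussianPDFReal, mul_left_comm, hsq]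
  gcongr
  rw [← Real.exp_add]
  gcongr
  linarith

theorem pi_gaussianReal_eq_withDensity {k : ℕ} (m : Fin k → ℝ) {v : ℝ≥0} (hv : v ≠ 0) :
    Measure.pi (fun l => gaussianReal (m l) v)
      = volume.withDensity fun x => ∏ l, gaussianPDF (m l) v (x l) := by
  rw [volume_pi]
  exact pi_eq_withDensity_prod (fun _ => measurable_gaussianPDF _ v)
    fun _ => gaussianReal_of_var_ne_zero _ hv

theorem mul_pi_gaussianReal_le_image_add {k : ℕ} (m : Fin k → ℝ) {v : ℝ≥0} {s X W : ℝ}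
    (hs : 0 < s) (hsv : s ≤ v) (hX : 0 ≤ X) {E : Set (Fin k → ℝ)}
    (hE : ∀ x ∈ E, ∀ l, x l - m l ≤ X) {w : Fin k → ℝ} (hw : ∀ l, 0 ≤ w l ∧ w l ≤ W) :
    ENNReal.ofReal (Real.exp (-((2 * X * W + W ^ 2) / (2 * s))) ^ k)
        * Measure.pi (fun l => gaussianReal (m l) v) E
      ≤ Measure.pi (fun l => gaussianReal (m l) v) ((· + w) '' E) := by
  have hv : v ≠ 0 := by
    rintro rfl
    exact (hs.trans_le hsv).ne' NNReal.coe_zero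
  rw [pi_gaussianReal_eq_withDensity m hv]
  have hmeas : Measurable fun x : Fin k → ℝ => ∏ l, gaussianPDF (m l) v (x l) :=
    Finset.measurable_prod _ fun l _ => (measurable_gaussianPDF _ v).comp (measurable_pi_apply l)
  refine mul_withDensity_le_withDensity_image_add hmeas fun x hx => ?_
  rw [ENNReal.ofReal_pow (Real.exp_pos _).le, ← Fin.prod_const, ← Finset.prod_mul_distrib]
  refine Finset.prod_le_prod' fun l _ => ?_
  rw [gaussianPDF, gaussianPDF, ← ENNReal.ofReal_mul (Real.exp_pos _).le]
  exact ENNReal.ofReal_le_ofReal <|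
    exp_mul_gaussianPDFReal_le_gaussianPDFReal_add _ hs hsv hX (hE x hx l) (hw l).1 (hw l).2

theorem map_add_eq_pi_gaussianReal {Ω ι : Type*} [MeasurableSpace Ω] [Fintype ι] {P : Measure Ω}
    [IsProbabilityMeasure P] {N : ι → Ω → ℝ} (hN : ∀ i, Measurable (N i)) (hind : iIndepFun N P)
    {v : ℝ≥0} (hmap : ∀ i, P.map (N i) = gaussianReal 0 v) (a : ι → ℝ) :
    P.map (fun ω i => a i + N i ω) = Measure.pi fun i => gaussianReal (a i) v := by
  have hind' : iIndepFun (fun i => (a i + ·) ∘ N i) P :=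
    hind.comp _ fun i => measurable_const_add (a i)
  refine ((iIndepFun_iff_map_fun_eq_pi_map
    fun i => ((hN i).const_add (a i)).aemeasurable).1 hind').trans ?_
  congr with i : 1
  change P.map ((a i + ·) ∘ N i) = _
  rw [← Measure.map_map (measurable_const_add _) (hN i), hmap, gaussianReal_map_const_add,
    zero_add]

theorem cond_preimage_eq_cond_map {Ω α : Type*} [MeasurableSpace Ω] [MeasurableSpace α]
    {P : Measure Ω} {Y : Ω → α} (hY : Measurable Y) {Q S : Set α} (hQ : MeasurableSet Q)
    (hS : MeasurableSet S) : P[Y ⁻¹' S | Y ⁻¹' Q] = (P.map Y)[S | Q] := by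
  rw [cond_apply (hY hQ), cond_apply hQ, Measure.map_apply hY hQ,
    Measure.map_apply hY (hQ.inter hS), Set.preimage_inter]

theorem cond_le_inv_of_mul_le {α : Type*} [MeasurableSpace α] {ν : Measure α} {Q S : Set α}
    (hQ : MeasurableSet Q) (hQ0 : ν Q ≠ 0) (hQtop : ν Q ≠ ∞) {K : ℝ≥0∞}
    (h : K * ν (Q ∩ S) ≤ ν Q) : ν[S | Q] ≤ K⁻¹ := by
  rw [cond_apply hQ, ENNReal.le_inv_iff_mul_le]
  calc (ν Q)⁻¹ * ν (Q ∩ S) * K = (ν Q)⁻¹ * (K * ν (Q ∩ S)) := by ring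
    _ ≤ (ν Q)⁻¹ * ν Q := by gcongr
    _ = 1 := ENNReal.inv_mul_cancel hQ0 hQtop

def ClosedUnderDisplacement {k : ℕ} (Q : Set (Fin k → ℝ)) : Prop :=
  ∀ z ∈ Q, ∀ w : Fin k → ℝ, StrictAnti w → (∀ i, 0 < w i) → z + w ∈ Q

theorem exists_strictAnti_pos_sub_eq_one {k : ℕ} {i j : Fin k} (hij : i < j) :
    ∃ t : Fin k → ℝ, StrictAnti t ∧ (∀ l, 0 < t l ∧ t l ≤ k) ∧ t i - t j = 1 := by
  have hji : (1 : ℝ) ≤ (j : ℝ) - i := by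
    have : ((i : ℕ) + 1 : ℝ) ≤ (j : ℕ) := by exact_mod_cast Fin.lt_def.mp hij
    linarith
  have hlt (l : Fin k) : (l : ℝ) < k := by exact_mod_cast l.isLt
  refine ⟨fun l => (k - l) / ((j : ℝ) - i), fun l l' h => ?_, fun l => ⟨?_, ?_⟩, ?_⟩
  · have : (l : ℝ) < l' := by exact_mod_cast h
    dsimp only
    gcongr
  · exact div_pos (by linarith [hlt l]) (by linarith)
  · calc (k - l) / ((j : ℝ) - i) ≤ k - l := div_le_self (by linarith [hlt l]) hji
      _ ≤ k := by linarith [(l : ℕ).cast_nonneg (α := ℝ)]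
  · rw [div_sub_div_same, sub_sub_sub_cancel_left, div_self (by linarith)]

theorem natCast_mul_le_of_le_measure_image_add {k : ℕ} {ν : Measure (Fin k → ℝ)}
    {Q E : Set (Fin k → ℝ)} (hQ : ClosedUnderDisplacement Q) (hanti : ∀ z ∈ Q, StrictAnti z)
    (hE : MeasurableSet E) (hEQ : E ⊆ Q) {i j : Fin k} (hij : i < j) {n : ℕ}
    (hgap : ∀ z ∈ E, z i - z j < 1 / (2 * n)) {κ : ℝ≥0∞}
    (hκ : ∀ w : Fin k → ℝ, (∀ l, 0 ≤ w l ∧ w l ≤ k) → κ * ν E ≤ ν ((· + w) '' E)) :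
    n * (κ * ν E) ≤ ν Q := by
  obtain ⟨t, ht_anti, ht_bdd, ht_gap⟩ := exists_strictAnti_pos_sub_eq_one hij
  set δ : ℝ := 1 / (2 * n)
  have hδ : 0 ≤ δ := by positivity
  -- the `m`-th shift moves the gap `z i - z j ∈ (0, δ)` into `((2m+1)δ, (2m+2)δ)`
  set w : ℕ → Fin k → ℝ := fun m => ((2 * m + 1) * δ) • t
  have hshift_gap (m : ℕ) : ∀ y ∈ (· + w m) '' E,
      (2 * m + 1) * δ < y i - y j ∧ y i - y j < (2 * m + 2) * δ := by
    rintro _ ⟨z, hz, rfl⟩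
    have hpos : 0 < z i - z j := sub_pos.2 (hanti z (hEQ hz) hij)
    have hy : (z + w m) i - (z + w m) j = z i - z j + (2 * m + 1) * δ := by
      simp only [w, Pi.add_apply, Pi.smul_apply, smul_eq_mul]
      linear_combination (2 * m + 1) * δ * ht_gap
    rw [hy]
    constructor <;> linarith [hgap z hz]
  have hshift_sub (m : ℕ) : (· + w m) '' E ⊆ Q := by
    rintro _ ⟨z, hz, rfl⟩
    have hβ : 0 < (2 * m + 1) * δ := by
      have := hshift_gap m _ ⟨z, hz, rfl⟩
      have : 0 < δ := by linarith
      positivity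
    exact hQ z (hEQ hz) _ (ht_anti.const_mul hβ) fun l => mul_pos hβ (ht_bdd l).1
  have hdisj : (Finset.range n : Set ℕ).PairwiseDisjoint fun m => (· + w m) '' E := by
    intro m _ m' _ hne
    refine Set.disjoint_left.2 fun y hy hy' => hne ?_
    have h := hshift_gap m y hy
    have h' := hshift_gap m' y hy'
    have hδ' : 0 < δ := by linarith
    by_contra hne'
    rcases Nat.lt_or_gt_of_ne hne' with hlt | hlt
    · have : (m : ℝ) + 1 ≤ m' := by exact_mod_cast hlt
      nlinarith
    · have : (m' : ℝ) + 1 ≤ m := by exact_mod_cast hlt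
      nlinarith
  have hw_bdd (m : ℕ) (hm : m < n) (l : Fin k) : 0 ≤ w m l ∧ w m l ≤ k := by
    have hβ : (2 * m + 1) * δ ≤ 1 := by
      have : (m : ℝ) + 1 ≤ n := by exact_mod_cast hm
      rw [mul_one_div, div_le_one (by linarith)]
      linarith
    simp only [w, Pi.smul_apply, smul_eq_mul]
    constructor
    · exact mul_nonneg (by positivity) (ht_bdd l).1.le
    · nlinarith [ht_bdd l]
  calc (n : ℝ≥0∞) * (κ * ν E) = ∑ _m ∈ Finset.range n, κ * ν E := by simp
    _ ≤ ∑ m ∈ Finset.range n, ν ((· + w m) '' E) :=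
        Finset.sum_le_sum fun m hm => hκ _ (hw_bdd m (Finset.mem_range.1 hm))
    _ = ν (⋃ m ∈ Finset.range n, (· + w m) '' E) := (measure_biUnion_finset hdisj
        fun m _ => (measurableEmbedding_addRight (w m)).measurableSet_image.2 hE).symm
    _ ≤ ν Q := measure_mono (Set.iUnion₂_subset fun m _ => hshift_sub m)

theorem cond_pi_gaussianReal_gap_le {k : ℕ} (hk : 0 < k) {B X s : ℝ} (hX : 0 ≤ X) (hs : 0 < s)
    {a : Fin k → ℝ} (ha : ∀ l, B - a l ≤ X) {v : ℝ≥0} (hsv : s ≤ v) {Q : Set (Fin k → ℝ)}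
    (hQm : MeasurableSet Q) (hanti : ∀ z ∈ Q, StrictAnti z) (hQ : ClosedUnderDisplacement Q)
    (hQ0 : Measure.pi (fun l => gaussianReal (a l) v) Q ≠ 0) {i j : Fin k} (hij : i < j)
    (n : ℕ) :
    cond (Measure.pi fun l => gaussianReal (a l) v) Q
        {y | y i - y j < 1 / (2 * n) ∧ y ⟨0, hk⟩ ≤ B}
      ≤ (n * ENNReal.ofReal (Real.exp (-((2 * X * k + (k : ℝ) ^ 2) / (2 * s))) ^ k))⁻¹ := by
  set S := {y : Fin k → ℝ | y i - y j < 1 / (2 * n) ∧ y ⟨0, hk⟩ ≤ B}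
  have hS : MeasurableSet S := by measurability
  have hbound : ∀ y ∈ Q ∩ S, ∀ l, y l - a l ≤ X := by
    rintro y ⟨hyQ, -, hy0⟩ l
    have : y l ≤ y ⟨0, hk⟩ := (hanti y hyQ).antitone (Nat.zero_le _)
    linarith [ha l]
  refine cond_le_inv_of_mul_le hQm hQ0 (measure_ne_top _ _) ?_
  rw [mul_assoc]
  exact natCast_mul_le_of_le_measure_image_add hQ hanti (hQm.inter hS) Set.inter_subset_left hij
    (fun y hy => hy.2.1) fun w hw => mul_pi_gaussianReal_le_image_add a hs hsv hX hbound hw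

theorem lem_qn_general
    (k : ℕ) (hk : 0 < k) (M c : ℝ) (hM : 0 < M) (hc0 : 0 < c)
    (ε : ℝ) (hε : 0 < ε) :
    ∃ δ > 0, ∀ (Ω : Type) (_ : MeasurableSpace Ω) (P : Measure Ω),
      IsProbabilityMeasure P →
      ∀ (N : Fin k → Ω → ℝ) (σ : ℝ), c < σ → σ < c⁻¹ →
      (∀ i, Measurable (N i)) →
      iIndepFun N P →
      (∀ i, Measure.map (N i) P = gaussianReal 0 (σ ^ 2).toNNReal) →
      ∀ a : Fin k → ℝ, StrictAnti a → (∀ i, |a i| ≤ M) →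
      ∀ Q : Set (Fin k → ℝ), MeasurableSet Q → (∀ z ∈ Q, StrictAnti z) →
      (∀ z ∈ Q, ∀ w : Fin k → ℝ, StrictAnti w → (∀ i, 0 < w i) → z + w ∈ Q) →
      P {ω | (fun i => a i + N i ω) ∈ Q} ≠ 0 →
      ∀ i j : Fin k, i < j →
        Measure.map (fun ω i => N i ω)
            (ProbabilityTheory.cond P {ω | (fun i => a i + N i ω) ∈ Q})
            {z | |(z i + a i) - (z j + a j)| < δ ∧ z ⟨0, hk⟩ ≤ M}
          < ENNReal.ofReal ε := by
  set κ : ℝ := Real.exp (-((2 * (3 * M) * k + (k : ℝ) ^ 2) / (2 * c ^ 2))) ^ k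
  have hκ : 0 < κ := by positivity
  obtain ⟨n, hn⟩ := exists_nat_gt (1 / (ε * κ))
  have hnεκ : 1 < n * (ε * κ) := (div_lt_iff₀ (by positivity)).1 hn
  have hn0 : (0 : ℝ) < n := lt_trans (by positivity) hn
  refine ⟨1 / (2 * n), by positivity, ?_⟩
  intro Ω _ P _ N σ hcσ _ hN hind hmap a _ haM Q hQm hQanti hQc hQ0 i j hij
  set Y : Ω → Fin k → ℝ := fun ω l => a l + N l ω
  have hY : Measurable Y := measurable_pi_lambda _ fun l => (hN l).const_add (a l)
  have hlaw := map_add_eq_pi_gaussianReal hN hind hmap a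
  set S := {y : Fin k → ℝ | y i - y j < 1 / (2 * n) ∧ y ⟨0, hk⟩ ≤ 2 * M}
  have hsub : (fun ω l => N l ω) ⁻¹'
      {z | |z i + a i - (z j + a j)| < 1 / (2 * n) ∧ z ⟨0, hk⟩ ≤ M} ⊆ Y ⁻¹' S := by
    rintro ω ⟨hgap, h0⟩
    exact ⟨by linarith [le_abs_self (N i ω + a i - (N j ω + a j))],
      by linarith [abs_le.1 (haM ⟨0, hk⟩)]⟩
  have hσ : c ^ 2 ≤ ((σ ^ 2).toNNReal : ℝ) := by
    rw [Real.coe_toNNReal _ (sq_nonneg σ)]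
    gcongr
  calc _ ≤ P[Y ⁻¹' S | Y ⁻¹' Q] := by
        rw [Measure.map_apply (measurable_pi_lambda _ hN) (by measurability)]
        exact measure_mono hsub
    _ = (Measure.pi fun l => gaussianReal (a l) (σ ^ 2).toNNReal)[S | Q] := by
        rw [cond_preimage_eq_cond_map hY hQm (by measurability), hlaw]
    _ ≤ (n * ENNReal.ofReal κ)⁻¹ :=
        cond_pi_gaussianReal_gap_le hk (by positivity) (by positivity)
          (fun l => by linarith [abs_le.1 (haM l)]) hσ hQm hQanti hQc
          (by rwa [← hlaw, Measure.map_apply hY hQm]) hij n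
    _ < ENNReal.ofReal ε := by
        rw [← ENNReal.ofReal_natCast, ← ENNReal.ofReal_mul hn0.le,
          ← ENNReal.ofReal_inv_of_pos (by positivity), ENNReal.ofReal_lt_ofReal_iff hε,
          inv_lt_iff_one_lt_mul₀ (by positivity)]
        linarith

/-- **Lemma 5.10 (lemqn).** Let `N = (N₁, …, N_k)` be a Gaussian vector with independent
centered entries of variance `σ²`, and let `Q ⊆ ℝ^k_>` be closed under
`ℝ^k_{>0}`-displacement. For `a ∈ ℝ^k_>`, let `μ_{a,σ,Q}` be the conditional distribution of
`N` given `a + N ∈ Q`. Fix `M > 0` and `c ∈ (0,1)`. For all `ε > 0` there exists `δ > 0`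
such that for all `a ∈ ℝ^k_>` with `‖a‖∞ ≤ M`, all `σ ∈ (c, c⁻¹)`, all such `Q` with
`P (a + N ∈ Q) > 0`, and each pair `i < j`:
`μ_{a,σ,Q} {x | |(x_i + a_i) - (x_j + a_j)| < δ and x₁ ≤ M} < ε`. -/
theorem lem_qn
    (k : ℕ) (hk : 0 < k) (M c : ℝ) (hM : 0 < M) (hc0 : 0 < c) (hc1 : c < 1)
    (ε : ℝ) (hε : 0 < ε) :
    ∃ δ > 0, ∀ (Ω : Type) (_ : MeasurableSpace Ω) (P : Measure Ω),
      IsProbabilityMeasure P →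
      ∀ (N : Fin k → Ω → ℝ) (σ : ℝ), c < σ → σ < c⁻¹ →
      (∀ i, Measurable (N i)) →
      iIndepFun N P →
      (∀ i, Measure.map (N i) P = gaussianReal 0 (σ ^ 2).toNNReal) →
      ∀ a : Fin k → ℝ, StrictAnti a → (∀ i, |a i| ≤ M) →
      ∀ Q : Set (Fin k → ℝ), MeasurableSet Q → (∀ z ∈ Q, StrictAnti z) →
      (∀ z ∈ Q, ∀ w : Fin k → ℝ, StrictAnti w → (∀ i, 0 < w i) → z + w ∈ Q) →
      P {ω | (fun i => a i + N i ω) ∈ Q} ≠ 0 →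
      ∀ i j : Fin k, i < j →
        Measure.map (fun ω i => N i ω)
            (ProbabilityTheory.cond P {ω | (fun i => a i + N i ω) ∈ Q})
            {z | |(z i + a i) - (z j + a j)| < δ ∧ z ⟨0, hk⟩ ≤ M}
          < ENNReal.ofReal ε :=
  lem_qn_general k hk M c hM hc0 ε hε
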